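/- arXiv:1802.01989 — 2 statements merged into one kernel-verified Lean document; each statement's English description precedes it below -/
import Mathlib

section
/- Let A be a nonnegative n×n matrix with Tr(A) ≤ 1, p a nonzero nonnegative n-vector, q a positive n-vector, and δ = q^- A* p where A* is the max-times Kleene star. Then the minimum of q^- x x^- p over positive vectors x satisfying A x ≤ x equals δ, and the optimal x are exactly x = (δ^{-1} p q^- ⊕ A)* u for positive u. -/
open scoped BigOperators

noncomputable def mtMulMat {n : ℕ} (A B : Matrix (Fin n) (Fin n) ℝ) :
    Matrix (Fin n) (Fin n) ℝ :=
  fun i j => ⨆ k, A i k * B k j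

noncomputable def mtMulVec {n : ℕ} (A : Matrix (Fin n) (Fin n) ℝ) (x : Fin n → ℝ) :
    Fin n → ℝ :=
  fun i => ⨆ j, A i j * x j

noncomputable def mtPow {n : ℕ} (A : Matrix (Fin n) (Fin n) ℝ) : ℕ → Matrix (Fin n) (Fin n) ℝ
  | 0 => fun i j => if i = j then 1 else 0
  | m + 1 => mtMulMat (mtPow A m) A

noncomputable def mtTrace {n : ℕ} (A : Matrix (Fin n) (Fin n) ℝ) : ℝ := ⨆ i, A i i

noncomputable def mtTr {n : ℕ} (A : Matrix (Fin n) (Fin n) ℝ) : ℝ :=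
  ⨆ m : Fin n, mtTrace (mtPow A (m.1 + 1))

noncomputable def kleeneStar {n : ℕ} (A : Matrix (Fin n) (Fin n) ℝ) :
    Matrix (Fin n) (Fin n) ℝ :=
  fun i j => ⨆ m : Fin n, mtPow A m.1 i j

noncomputable def cycleMean {n : ℕ} (A : Matrix (Fin n) (Fin n) ℝ) (c : List (Fin n)) : ℝ :=
  (((c.zip (c.rotate 1)).map (fun p => A p.1 p.2)).prod) ^ ((1 : ℝ) / c.length)

noncomputable def specRad {n : ℕ} (A : Matrix (Fin n) (Fin n) ℝ) : ℝ :=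
  sSup {r : ℝ | ∃ c : List (Fin n), c ≠ [] ∧ c.length ≤ n ∧ r = cycleMean A c}

/-!
Call `x > 0` feasible if `A x ≤ x`. If `tr A ≤ 1`, every walk of length `n` contains a cycle of
weight at most `1`, so all max-times powers of `A` are bounded by `A*`; in particular
`A A* ≤ A*`, and a feasible `x` satisfies `A*_{ij} x_j ≤ x_i`, which gives `δ ≤ q⁻ x x⁻ p`.
For `x > 0` the reverse inequality `q⁻ x x⁻ p ≤ δ` says exactly `δ⁻¹ p q⁻ x ≤ x`, so the optimal
feasible vectors are the positive subeigenvectors of `M = δ⁻¹ p q⁻ ⊕ A`. One of them is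
`A* (p ⊕ c q)` for `c > 0` small: it dominates `p`, and `q⁻ A* (p ⊕ c q) ≤ δ`. A positive
subeigenvector forces `tr M ≤ 1`, hence `M M* ≤ M*`, and then the positive subeigenvectors of `M`
are exactly the vectors `M* u` with `u > 0`.
-/

open Finset

theorem ciSup_mul_ciSup_le_iff {ι κ : Type*} [Finite ι] [Nonempty ι] [Finite κ] [Nonempty κ]
    {f : ι → ℝ} {g : κ → ℝ} (hf : ∀ i, 0 ≤ f i) (hg : ∀ j, 0 ≤ g j) {c : ℝ} :
    (⨆ i, f i) * (⨆ j, g j) ≤ c ↔ ∀ i j, f i * g j ≤ c := by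
  rw [Real.iSup_mul_of_nonneg (Real.iSup_nonneg hg), ciSup_le_iff (Finite.bddAbove_range _)]
  refine forall_congr' fun i => ?_
  rw [Real.mul_iSup_of_nonneg (hf i), ciSup_le_iff (Finite.bddAbove_range _)]

theorem ciSup_max_mul_le_iff {ι : Type*} [Finite ι] [Nonempty ι] {f g x : ι → ℝ}
    (hx : ∀ j, 0 ≤ x j) {a : ℝ} :
    (⨆ j, max (f j) (g j) * x j) ≤ a ↔ (⨆ j, f j * x j) ≤ a ∧ (⨆ j, g j * x j) ≤ a := by
  simp only [ciSup_le_iff (Finite.bddAbove_range _), max_mul_of_nonneg _ _ (hx _), max_le_iff,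
    forall_and]

theorem exists_lt_le_map_eq {n : ℕ} (w : ℕ → Fin n) : ∃ s t, s < t ∧ t ≤ n ∧ w s = w t := by
  obtain ⟨a, b, hab, hw⟩ :=
    Fintype.exists_ne_map_eq_of_card_lt (fun t : Fin (n + 1) => w t) (by simp)
  rcases Fin.lt_or_lt_of_ne hab with h | h
  · exact ⟨a, b, h, Nat.lt_succ_iff.mp b.2, hw⟩
  · exact ⟨b, a, h, Nat.lt_succ_iff.mp a.2, hw.symm⟩

namespace MaxTimes

section Powers

variable {n : ℕ} {C : Matrix (Fin n) (Fin n) ℝ}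

theorem mtPow_succ_apply (m : ℕ) (i j : Fin n) :
    mtPow C (m + 1) i j = ⨆ k, mtPow C m i k * C k j := rfl

theorem mtPow_nonneg (hC : ∀ i j, 0 ≤ C i j) (m : ℕ) (i j : Fin n) : 0 ≤ mtPow C m i j := by
  induction m generalizing j with
  | zero => simp only [mtPow]; split_ifs <;> norm_num
  | succ m ih => exact Real.iSup_nonneg fun k => mul_nonneg (ih k) (hC k j)

theorem mul_le_mtPow_succ (m : ℕ) (i k j : Fin n) :
    mtPow C m i k * C k j ≤ mtPow C (m + 1) i j :=
  le_ciSup (Finite.bddAbove_range (fun l => mtPow C m i l * C l j)) k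

theorem le_mtPow_one (i j : Fin n) : C i j ≤ mtPow C 1 i j := by
  simpa [mtPow] using mul_le_mtPow_succ (C := C) 0 i i j

theorem mtPow_le_kleeneStar_of_lt {m : ℕ} (hm : m < n) (i j : Fin n) :
    mtPow C m i j ≤ kleeneStar C i j :=
  le_ciSup (Finite.bddAbove_range (fun l : Fin n => mtPow C l i j)) ⟨m, hm⟩

theorem kleeneStar_nonneg (hC : ∀ i j, 0 ≤ C i j) (i j : Fin n) : 0 ≤ kleeneStar C i j :=
  Real.iSup_nonneg fun _ => mtPow_nonneg hC _ i j

theorem one_le_kleeneStar_self (i : Fin n) : 1 ≤ kleeneStar C i i := by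
  simpa [mtPow] using mtPow_le_kleeneStar_of_lt (C := C) (Fin.pos i) i i

theorem mtPow_self_le_one (hTr : mtTr C ≤ 1) {k : ℕ} (hk : 0 < k) (hkn : k ≤ n) (i : Fin n) :
    mtPow C k i i ≤ 1 := by
  have hle : mtTrace (mtPow C k) ≤ mtTr C := by
    obtain ⟨l, rfl⟩ := Nat.exists_eq_add_one_of_ne_zero hk.ne'
    exact le_ciSup (Finite.bddAbove_range (fun m : Fin n => mtTrace (mtPow C (m + 1)))) ⟨l, hkn⟩
  exact (le_ciSup (Finite.bddAbove_range (fun i => mtPow C k i i)) i).trans (hle.trans hTr)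

variable [Nonempty (Fin n)]

theorem mtPow_mul_mtPow_le (hC : ∀ i j, 0 ≤ C i j) (a b : ℕ) (i k j : Fin n) :
    mtPow C a i k * mtPow C b k j ≤ mtPow C (a + b) i j := by
  induction b generalizing j with
  | zero =>
    simp only [mtPow, mul_ite, mul_one, mul_zero, add_zero]
    split_ifs with h
    · rw [h]
    · exact mtPow_nonneg hC a i j
  | succ b ih =>
    rw [mtPow_succ_apply, Real.mul_iSup_of_nonneg (mtPow_nonneg hC a i k)]
    refine ciSup_le fun l => ?_
    rw [← mul_assoc, ← add_assoc]
    exact (mul_le_mul_of_nonneg_right (ih l) (hC l j)).trans (mul_le_mtPow_succ _ i l j)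

end Powers

section Walks

variable {n : ℕ} {C : Matrix (Fin n) (Fin n) ℝ}

noncomputable def walkWeight (C : Matrix (Fin n) (Fin n) ℝ) (w : ℕ → Fin n) (a b : ℕ) : ℝ :=
  ∏ u ∈ Ico a b, C (w u) (w (u + 1))

theorem walkWeight_nonneg (hC : ∀ i j, 0 ≤ C i j) (w : ℕ → Fin n) (a b : ℕ) :
    0 ≤ walkWeight C w a b :=
  prod_nonneg fun _ _ => hC _ _

theorem walkWeight_mul_walkWeight (w : ℕ → Fin n) {a b c : ℕ} (hab : a ≤ b) (hbc : b ≤ c) :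
    walkWeight C w a b * walkWeight C w b c = walkWeight C w a c :=
  prod_Ico_consecutive _ hab hbc

theorem walkWeight_le_mtPow (hC : ∀ i j, 0 ≤ C i j) (w : ℕ → Fin n) {a b : ℕ} (hab : a ≤ b) :
    walkWeight C w a b ≤ mtPow C (b - a) (w a) (w b) := by
  induction b, hab using Nat.le_induction with
  | base => simp [walkWeight, mtPow]
  | succ b hab ih =>
    rw [walkWeight, prod_Ico_succ_top hab, ← walkWeight, Nat.sub_add_comm hab]
    exact (mul_le_mul_of_nonneg_right ih (hC _ _)).trans (mul_le_mtPow_succ _ _ _ _)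

variable [Nonempty (Fin n)]

theorem exists_walk_of_mtPow_pos (hC : ∀ i j, 0 ≤ C i j) {m : ℕ} {i j : Fin n}
    (hpos : 0 < mtPow C m i j) :
    ∃ w : ℕ → Fin n, w 0 = i ∧ w m = j ∧ mtPow C m i j ≤ walkWeight C w 0 m := by
  induction m generalizing j with
  | zero =>
    obtain rfl : i = j := by by_contra h; simp [mtPow, h] at hpos
    exact ⟨fun _ => i, rfl, rfl, by simp [mtPow, walkWeight]⟩
  | succ m ih =>
    obtain ⟨k, hk⟩ := exists_eq_ciSup_of_finite (f := fun k => mtPow C m i k * C k j)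
    rw [mtPow_succ_apply, ← hk] at hpos ⊢
    obtain ⟨w, hw0, hwm, hw⟩ := ih (pos_of_mul_pos_left hpos (hC k j))
    refine ⟨Function.update w (m + 1) j, by simp [hw0], by simp, ?_⟩
    have hprefix : walkWeight C (Function.update w (m + 1) j) 0 m = walkWeight C w 0 m :=
      prod_congr rfl fun u hu => by
        have := (mem_Ico.mp hu).2
        rw [Function.update_of_ne (by omega), Function.update_of_ne (by omega)]
    rw [walkWeight, prod_Ico_succ_top (Nat.zero_le m), ← walkWeight, hprefix,
      Function.update_self, Function.update_of_ne (by omega), hwm]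
    exact mul_le_mul_of_nonneg_right hw (hC k j)

/-- A walk of length `n` repeats a vertex; cutting out the cycle in between, whose weight is at
most `1`, leaves a walk of length `< n`. -/
theorem mtPow_card_le_kleeneStar (hC : ∀ i j, 0 ≤ C i j) (hTr : mtTr C ≤ 1) (i j : Fin n) :
    mtPow C n i j ≤ kleeneStar C i j := by
  rcases le_or_gt (mtPow C n i j) 0 with hle | hpos
  · exact hle.trans (kleeneStar_nonneg hC i j)
  obtain ⟨w, hw0, hwn, hw⟩ := exists_walk_of_mtPow_pos hC hpos
  obtain ⟨s, t, hst, htn, hwst⟩ := exists_lt_le_map_eq w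
  have hprefix := walkWeight_le_mtPow hC w (Nat.zero_le s)
  have hcycle := walkWeight_le_mtPow hC w hst.le
  have hsuffix := walkWeight_le_mtPow hC w htn
  rw [Nat.sub_zero, hw0] at hprefix
  rw [← hwst] at hcycle
  rw [← hwst, hwn] at hsuffix
  have hcycle_le_one : walkWeight C w s t ≤ 1 :=
    hcycle.trans (mtPow_self_le_one hTr (by omega) (by omega) _)
  calc mtPow C n i j ≤ walkWeight C w 0 n := hw
    _ = walkWeight C w 0 s * walkWeight C w s t * walkWeight C w t n := by
      rw [walkWeight_mul_walkWeight w (Nat.zero_le s) hst.le,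
        walkWeight_mul_walkWeight w (Nat.zero_le t) htn]
    _ ≤ walkWeight C w 0 s * 1 * walkWeight C w t n := by
      gcongr
      · exact walkWeight_nonneg hC w _ _
      · exact walkWeight_nonneg hC w _ _
    _ ≤ mtPow C s i (w s) * mtPow C (n - t) (w s) j := by
      rw [mul_one]
      exact mul_le_mul hprefix hsuffix (walkWeight_nonneg hC w _ _) (mtPow_nonneg hC _ _ _)
    _ ≤ mtPow C (s + (n - t)) i j := mtPow_mul_mtPow_le hC _ _ _ _ _
    _ ≤ kleeneStar C i j := mtPow_le_kleeneStar_of_lt (by omega) i j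

end Walks

section KleeneStar

variable {n : ℕ} [Nonempty (Fin n)] {C : Matrix (Fin n) (Fin n) ℝ}

theorem kleeneStar_mul_le (hC : ∀ i j, 0 ≤ C i j) (hTr : mtTr C ≤ 1) (i k j : Fin n) :
    kleeneStar C i k * C k j ≤ kleeneStar C i j := by
  obtain ⟨⟨l, hl⟩, hK⟩ := exists_eq_ciSup_of_finite (f := fun l : Fin n => mtPow C l i k)
  rw [kleeneStar, ← hK]
  refine (mul_le_mtPow_succ l i k j).trans ?_
  rcases (show l + 1 ≤ n from hl).lt_or_eq with hlt | heq
  · exact mtPow_le_kleeneStar_of_lt hlt i j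
  · rw [heq]
    exact mtPow_card_le_kleeneStar hC hTr i j

theorem mtPow_le_kleeneStar (hC : ∀ i j, 0 ≤ C i j) (hTr : mtTr C ≤ 1) (m : ℕ) (i j : Fin n) :
    mtPow C m i j ≤ kleeneStar C i j := by
  induction m generalizing j with
  | zero => exact mtPow_le_kleeneStar_of_lt (Fin.pos i) i j
  | succ m ih =>
    exact ciSup_le fun k =>
      (mul_le_mul_of_nonneg_right (ih k) (hC k j)).trans (kleeneStar_mul_le hC hTr i k j)

theorem mul_kleeneStar_le (hC : ∀ i j, 0 ≤ C i j) (hTr : mtTr C ≤ 1) (i k j : Fin n) :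
    C i k * kleeneStar C k j ≤ kleeneStar C i j := by
  obtain ⟨⟨l, _⟩, hK⟩ := exists_eq_ciSup_of_finite (f := fun l : Fin n => mtPow C l k j)
  rw [kleeneStar, ← hK]
  calc C i k * mtPow C l k j ≤ mtPow C 1 i k * mtPow C l k j :=
        mul_le_mul_of_nonneg_right (le_mtPow_one i k) (mtPow_nonneg hC l k j)
    _ ≤ mtPow C (1 + l) i j := mtPow_mul_mtPow_le hC _ _ _ _ _
    _ ≤ kleeneStar C i j := mtPow_le_kleeneStar hC hTr _ i j

end KleeneStar

section Subeigenvectors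

variable {n : ℕ} [Nonempty (Fin n)] {C : Matrix (Fin n) (Fin n) ℝ} {x : Fin n → ℝ}
theorem mtPow_mul_le_of_subeigenvector (hC : ∀ i j, 0 ≤ C i j) (hx : ∀ i, 0 ≤ x i)
    (hCx : ∀ i, (⨆ j, C i j * x j) ≤ x i) (m : ℕ) (i j : Fin n) :
    mtPow C m i j * x j ≤ x i := by
  induction m generalizing j with
  | zero =>
    simp only [mtPow, ite_mul, one_mul, zero_mul]
    split_ifs with h
    · rw [h]
    · exact hx i
  | succ m ih =>
    rw [mtPow_succ_apply, Real.iSup_mul_of_nonneg (hx j)]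
    refine ciSup_le fun k => ?_
    rw [mul_assoc]
    have hk : C k j * x j ≤ x k :=
      (le_ciSup (Finite.bddAbove_range (fun l => C k l * x l)) j).trans (hCx k)
    exact (mul_le_mul_of_nonneg_left hk (mtPow_nonneg hC m i k)).trans (ih k)

theorem kleeneStar_mul_le_of_subeigenvector (hC : ∀ i j, 0 ≤ C i j) (hx : ∀ i, 0 ≤ x i)
    (hCx : ∀ i, (⨆ j, C i j * x j) ≤ x i) (i j : Fin n) : kleeneStar C i j * x j ≤ x i := by
  rw [kleeneStar, Real.iSup_mul_of_nonneg (hx j)]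
  exact ciSup_le fun m => mtPow_mul_le_of_subeigenvector hC hx hCx m i j

theorem mtMulVec_kleeneStar_of_subeigenvector (hC : ∀ i j, 0 ≤ C i j) (hx : ∀ i, 0 ≤ x i)
    (hCx : ∀ i, (⨆ j, C i j * x j) ≤ x i) : mtMulVec (kleeneStar C) x = x := by
  funext i
  refine le_antisymm (ciSup_le (kleeneStar_mul_le_of_subeigenvector hC hx hCx i)) ?_
  exact (le_mul_of_one_le_left (hx i) (one_le_kleeneStar_self i)).trans
    (le_ciSup (Finite.bddAbove_range (fun j => kleeneStar C i j * x j)) i)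

theorem mtTr_le_one_of_subeigenvector (hC : ∀ i j, 0 ≤ C i j) (hx : ∀ i, 0 < x i)
    (hCx : ∀ i, (⨆ j, C i j * x j) ≤ x i) : mtTr C ≤ 1 :=
  ciSup_le fun _ => ciSup_le fun i => (mul_le_iff_le_one_left (hx i)).mp
    (mtPow_mul_le_of_subeigenvector hC (fun j => (hx j).le) hCx _ i i)

theorem mtMulVec_kleeneStar_subeigenvector (hC : ∀ i j, 0 ≤ C i j) (hTr : mtTr C ≤ 1)
    {u : Fin n → ℝ} (hu : ∀ i, 0 ≤ u i) (i : Fin n) :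
    (⨆ j, C i j * mtMulVec (kleeneStar C) u j) ≤ mtMulVec (kleeneStar C) u i := by
  refine ciSup_le fun j => ?_
  rw [mtMulVec, Real.mul_iSup_of_nonneg (hC i j)]
  refine ciSup_le fun k => ?_
  rw [← mul_assoc]
  exact (mul_le_mul_of_nonneg_right (mul_kleeneStar_le hC hTr i j k) (hu k)).trans
    (le_ciSup (Finite.bddAbove_range (fun l => kleeneStar C i l * u l)) k)

end Subeigenvectors

section Objective

variable {n : ℕ} [Nonempty (Fin n)] {A : Matrix (Fin n) (Fin n) ℝ} {p q x : Fin n → ℝ}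

theorem ciSup_inv_mul_kleeneStar_mul_le_objective (hA : ∀ i j, 0 ≤ A i j) (hp : ∀ i, 0 ≤ p i)
    (hq : ∀ i, 0 < q i) (hx : ∀ i, 0 < x i) (hAx : ∀ i, (⨆ j, A i j * x j) ≤ x i) :
    (⨆ i, ⨆ j, (q i)⁻¹ * kleeneStar A i j * p j) ≤ (⨆ i, x i / q i) * (⨆ j, p j / x j) := by
  refine ciSup_le fun i => ciSup_le fun j => ?_
  have hK : kleeneStar A i j ≤ x i / x j := (le_div_iff₀ (hx j)).mpr
    (kleeneStar_mul_le_of_subeigenvector hA (fun k => (hx k).le) hAx i j)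
  calc (q i)⁻¹ * kleeneStar A i j * p j ≤ (q i)⁻¹ * (x i / x j) * p j := by
        gcongr
        · exact hp j
        · exact (inv_pos.mpr (hq i)).le
    _ = x i / q i * (p j / x j) := by ring
    _ ≤ (⨆ i, x i / q i) * (⨆ j, p j / x j) :=
      (ciSup_mul_ciSup_le_iff (fun k => (div_pos (hx k) (hq k)).le)
        (fun k => div_nonneg (hp k) (hx k).le)).mp le_rfl i j

theorem objective_le_iff (hp : ∀ i, 0 ≤ p i) (hq : ∀ i, 0 < q i) (hx : ∀ i, 0 < x i) {c : ℝ}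
    (hc : 0 < c) : (⨆ i, x i / q i) * (⨆ j, p j / x j) ≤ c ↔
      ∀ i, (⨆ j, c⁻¹ * (p i / q j) * x j) ≤ x i := by
  rw [ciSup_mul_ciSup_le_iff (fun k => (div_pos (hx k) (hq k)).le)
    (fun k => div_nonneg (hp k) (hx k).le), forall_comm]
  simp only [ciSup_le_iff (Finite.bddAbove_range _)]
  refine forall_congr' fun i => forall_congr' fun j => ?_
  rw [div_mul_div_comm, div_le_iff₀ (mul_pos (hq j) (hx i)), mul_assoc, inv_mul_le_iff₀ hc,
    div_mul_eq_mul_div, div_le_iff₀ (hq j)]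
  constructor <;> intro h <;> linarith

theorem objective_le_iff_subeigenvector_max (hp : ∀ i, 0 ≤ p i) (hq : ∀ i, 0 < q i)
    (hx : ∀ i, 0 < x i) (hAx : ∀ i, (⨆ j, A i j * x j) ≤ x i) {c : ℝ} (hc : 0 < c) :
    (⨆ i, x i / q i) * (⨆ j, p j / x j) ≤ c ↔
      ∀ i, (⨆ j, max (c⁻¹ * (p i / q j)) (A i j) * x j) ≤ x i := by
  simp only [objective_le_iff hp hq hx hc, ciSup_max_mul_le_iff (fun j => (hx j).le), hAx,
    and_true]

theorem exists_subeigenvector_objective_le (hA : ∀ i j, 0 ≤ A i j) (hTr : mtTr A ≤ 1)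
    (hp : ∀ i, 0 ≤ p i) (hq : ∀ i, 0 < q i) {δ : ℝ} (hδ : 0 < δ)
    (hδ_ge : ∀ i j, (q i)⁻¹ * kleeneStar A i j * p j ≤ δ) :
    ∃ x : Fin n → ℝ, (∀ i, 0 < x i) ∧ (∀ i, (⨆ j, A i j * x j) ≤ x i) ∧
      (⨆ i, x i / q i) * (⨆ j, p j / x j) ≤ δ := by
  obtain ⟨c, hc, hcq⟩ : ∃ c > 0, ∀ j k, c * (kleeneStar A j k * q k) ≤ δ * q j := by
    set γ := ⨆ j, ⨆ k, kleeneStar A j k * q k / q j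
    have hγ : ∀ j k, kleeneStar A j k * q k / q j ≤ γ := fun j k =>
      le_ciSup_of_le (Finite.bddAbove_range _) j
        (le_ciSup (Finite.bddAbove_range (fun k => kleeneStar A j k * q k / q j)) k)
    have hγ_pos : 0 < γ := by
      obtain ⟨j⟩ := ‹Nonempty (Fin n)›
      exact (div_pos (mul_pos (one_pos.trans_le (one_le_kleeneStar_self j)) (hq j)) (hq j)).trans_le
        (hγ j j)
    refine ⟨δ / γ, div_pos hδ hγ_pos, fun j k => ?_⟩
    calc δ / γ * (kleeneStar A j k * q k) ≤ δ / γ * (γ * q j) :=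
          mul_le_mul_of_nonneg_left ((div_le_iff₀ (hq j)).mp (hγ j k)) (div_pos hδ hγ_pos).le
      _ = δ * q j := by field_simp
  set u : Fin n → ℝ := fun k => max (p k) (c * q k)
  have hu : ∀ k, 0 ≤ u k := fun k => (hp k).trans (le_max_left _ _)
  set x := mtMulVec (kleeneStar A) u
  have hux : ∀ i, u i ≤ x i := fun i =>
    (le_mul_of_one_le_left (hu i) (one_le_kleeneStar_self i)).trans
      (le_ciSup (Finite.bddAbove_range (fun k => kleeneStar A i k * u k)) i)
  have hx : ∀ i, 0 < x i := fun i =>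
    (mul_pos hc (hq i)).trans_le ((le_max_right _ _).trans (hux i))
  have hxq : ∀ j, x j ≤ δ * q j := fun j => ciSup_le fun k => by
    rw [mul_max_of_nonneg _ _ (kleeneStar_nonneg hA j k)]
    refine max_le ?_ (by linarith [hcq j k])
    have h := hδ_ge j k
    rwa [mul_assoc, inv_mul_le_iff₀ (hq j), mul_comm (q j)] at h
  refine ⟨x, hx, mtMulVec_kleeneStar_subeigenvector hA hTr hu, ?_⟩
  calc (⨆ i, x i / q i) * (⨆ j, p j / x j) ≤ δ * 1 :=
        mul_le_mul (ciSup_le fun i => (div_le_iff₀ (hq i)).mpr (hxq i))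
          (ciSup_le fun j => (div_le_one (hx j)).mpr ((le_max_left _ _).trans (hux j)))
          (Real.iSup_nonneg fun j => div_nonneg (hp j) (hx j).le) hδ.le
    _ = δ := mul_one δ

end Objective

end MaxTimes

open MaxTimes in
theorem stmt13_general {n : ℕ} (A : Matrix (Fin n) (Fin n) ℝ)
    (hA : ∀ i j, 0 ≤ A i j) (hTr : mtTr A ≤ 1)
    (p : Fin n → ℝ) (hp : ∀ i, 0 ≤ p i) (hp0 : p ≠ 0)
    (q : Fin n → ℝ) (hq : ∀ i, 0 < q i)
    (δ : ℝ) (hδ : δ = ⨆ i, ⨆ j, (q i)⁻¹ * kleeneStar A i j * p j)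
    (M : Matrix (Fin n) (Fin n) ℝ)
    (hM : M = fun i j => max (δ⁻¹ * (p i / q j)) (A i j)) :
    IsLeast {v : ℝ | ∃ x : Fin n → ℝ, (∀ i, 0 < x i) ∧
        (∀ i, (⨆ j, A i j * x j) ≤ x i) ∧
        v = (⨆ i, x i / q i) * (⨆ j, p j / x j)} δ ∧
      ∀ x : Fin n → ℝ, (∀ i, 0 < x i) → (∀ i, (⨆ j, A i j * x j) ≤ x i) →
        ((⨆ i, x i / q i) * (⨆ j, p j / x j) = δ ↔
          ∃ u : Fin n → ℝ, (∀ i, 0 < u i) ∧ x = mtMulVec (kleeneStar M) u) := by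
  obtain ⟨j₀, hj₀⟩ := Function.ne_iff.mp hp0
  have : Nonempty (Fin n) := ⟨j₀⟩
  have hδ_ge : ∀ i j, (q i)⁻¹ * kleeneStar A i j * p j ≤ δ := fun i j => hδ ▸
    le_ciSup_of_le (Finite.bddAbove_range _) i
      (le_ciSup (Finite.bddAbove_range (fun j => (q i)⁻¹ * kleeneStar A i j * p j)) j)
  have hδ_pos : 0 < δ := (mul_pos (mul_pos (inv_pos.mpr (hq j₀))
    (one_pos.trans_le (one_le_kleeneStar_self j₀))) ((hp j₀).lt_of_ne' hj₀)).trans_le (hδ_ge j₀ j₀)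
  have hlower : ∀ x : Fin n → ℝ, (∀ i, 0 < x i) → (∀ i, (⨆ j, A i j * x j) ≤ x i) →
      δ ≤ (⨆ i, x i / q i) * (⨆ j, p j / x j) := fun x hx hAx =>
    hδ ▸ ciSup_inv_mul_kleeneStar_mul_le_objective hA hp hq hx hAx
  have hMnn : ∀ i j, 0 ≤ M i j := fun i j => hM ▸ (hA i j).trans (le_max_right _ _)
  have hM_sub : ∀ x : Fin n → ℝ, (∀ i, 0 < x i) → (∀ i, (⨆ j, A i j * x j) ≤ x i) →
      ((⨆ i, x i / q i) * (⨆ j, p j / x j) ≤ δ ↔ ∀ i, (⨆ j, M i j * x j) ≤ x i) :=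
    fun x hx hAx => hM ▸ objective_le_iff_subeigenvector_max hp hq hx hAx hδ_pos
  obtain ⟨x₀, hx₀, hAx₀, hobj₀⟩ := exists_subeigenvector_objective_le hA hTr hp hq hδ_pos hδ_ge
  have hMTr : mtTr M ≤ 1 :=
    mtTr_le_one_of_subeigenvector hMnn hx₀ ((hM_sub x₀ hx₀ hAx₀).mp hobj₀)
  refine ⟨⟨⟨x₀, hx₀, hAx₀, (le_antisymm hobj₀ (hlower x₀ hx₀ hAx₀)).symm⟩, ?_⟩,
    fun x hx hAx => ⟨fun hobj => ⟨x, hx, ?_⟩, ?_⟩⟩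
  · rintro v ⟨x, hx, hAx, rfl⟩
    exact hlower x hx hAx
  · exact (mtMulVec_kleeneStar_of_subeigenvector hMnn (fun i => (hx i).le)
      ((hM_sub x hx hAx).mp hobj.le)).symm
  · rintro ⟨u, hu, rfl⟩
    exact le_antisymm
      ((hM_sub _ hx hAx).mpr (mtMulVec_kleeneStar_subeigenvector hMnn hMTr fun i => (hu i).le))
      (hlower _ hx hAx)

theorem stmt13 {n : ℕ} (hn : 0 < n) (A : Matrix (Fin n) (Fin n) ℝ)
    (hA : ∀ i j, 0 ≤ A i j) (hTr : mtTr A ≤ 1)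
    (p : Fin n → ℝ) (hp : ∀ i, 0 ≤ p i) (hp0 : p ≠ 0)
    (q : Fin n → ℝ) (hq : ∀ i, 0 < q i)
    (δ : ℝ) (hδ : δ = ⨆ i, ⨆ j, (q i)⁻¹ * kleeneStar A i j * p j)
    (M : Matrix (Fin n) (Fin n) ℝ)
    (hM : M = fun i j => max (δ⁻¹ * (p i / q j)) (A i j)) :
    IsLeast {v : ℝ | ∃ x : Fin n → ℝ, (∀ i, 0 < x i) ∧
        (∀ i, (⨆ j, A i j * x j) ≤ x i) ∧
        v = (⨆ i, x i / q i) * (⨆ j, p j / x j)} δ ∧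
      ∀ x : Fin n → ℝ, (∀ i, 0 < x i) → (∀ i, (⨆ j, A i j * x j) ≤ x i) →
        ((⨆ i, x i / q i) * (⨆ j, p j / x j) = δ ↔
          ∃ u : Fin n → ℝ, (∀ i, 0 < u i) ∧ x = mtMulVec (kleeneStar M) u) :=
  stmt13_general A hA hTr p hp hp0 q hq δ hδ M hM
end

section
/- Let A be a nonnegative n×n matrix with max-times spectral radius λ > 0, and let δ = 1^T (λ^{-1}A)* 1 (the maximal entry of the Kleene star of λ^{-1}A). Then the minimum of the Hilbert-seminorm ratio (max_i x_i)(max_j 1/x_j) over all vectors x of the form x = (λ^{-1}A)* u with u positive equals δ, and the minimizers are exactly x = (δ^{-1} 1 1^T ⊕ λ^{-1}A)* u for positive u. -/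
open scoped BigOperators

/-! With `B = λ⁻¹ A` every cycle weight is at most one, so `S = B*` is transitive with unit
diagonal and fixes every `x = S u`. Hence `x p ≥ S p q * x q`, which bounds the Hilbert ratio of
`x` below by the maximal entry `δ` of `S`; `u = 1` attains the bound. A vector `x = S u` has ratio
`δ` iff `x i ≤ δ * x j` for all `i j`; together with `B x ≤ x` this says that `x` is a
subeigenvector of `M = δ⁻¹ 1 1ᵀ ⊕ B`, i.e. `x = M* x`. Conversely `M*` is transitive with all
entries at least `δ⁻¹`, which caps the ratio on its image by `δ`. Both uses of `M*` need
`λ(M) ≤ 1`, which holds because `S 1` is a positive subeigenvector of `M`. -/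

section MaxTimes

variable {n : ℕ}

section Basic

variable {C : Matrix (Fin n) (Fin n) ℝ}

lemma le_mtMulVec (C : Matrix (Fin n) (Fin n) ℝ) (x : Fin n → ℝ) (i j : Fin n) :
    C i j * x j ≤ mtMulVec C x i :=
  le_ciSup (f := fun j => C i j * x j) (Finite.bddAbove_range _) j

lemma mtPow_succ_apply (C : Matrix (Fin n) (Fin n) ℝ) (m : ℕ) (i j : Fin n) :
    mtPow C (m + 1) i j = ⨆ k, mtPow C m i k * C k j :=
  rfl

lemma mtPow_nonneg (hC : ∀ i j, 0 ≤ C i j) (m : ℕ) (i j : Fin n) : 0 ≤ mtPow C m i j := by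
  induction m generalizing j with
  | zero => simp only [mtPow]; split_ifs <;> norm_num
  | succ m ih => exact Real.iSup_nonneg fun k => mul_nonneg (ih k) (hC k j)

lemma mtPow_one (hC : ∀ i j, 0 ≤ C i j) (i j : Fin n) : mtPow C 1 i j = C i j := by
  have : Nonempty (Fin n) := ⟨i⟩
  refine le_antisymm (ciSup_le fun k => ?_) ?_
  · simp only [mtPow]
    split_ifs with h
    · rw [h, one_mul]
    · rw [zero_mul]; exact hC i j
  · calc C i j = mtPow C 0 i i * C i j := by simp [mtPow]
      _ ≤ mtPow C 1 i j :=
        le_ciSup (f := fun k => mtPow C 0 i k * C k j) (Finite.bddAbove_range _) i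

lemma mtPow_mul_mtPow_le (hC : ∀ i j, 0 ≤ C i j) (a b : ℕ) (i k j : Fin n) :
    mtPow C a i k * mtPow C b k j ≤ mtPow C (a + b) i j := by
  have : Nonempty (Fin n) := ⟨i⟩
  induction b generalizing j with
  | zero =>
    simp only [mtPow]
    split_ifs with h
    · rw [h, mul_one]; rfl
    · rw [mul_zero]; exact mtPow_nonneg hC _ i j
  | succ b ih =>
    rw [mtPow_succ_apply, Real.mul_iSup_of_nonneg (mtPow_nonneg hC a i k), ← add_assoc,
      mtPow_succ_apply]
    refine ciSup_le fun l => ?_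
    rw [← mul_assoc]
    exact (mul_le_mul_of_nonneg_right (ih l) (hC l j)).trans
      (le_ciSup (f := fun l => mtPow C (a + b) i l * C l j) (Finite.bddAbove_range _) l)

lemma mtPow_le_kleeneStar_of_lt {m : ℕ} (hm : m < n) (i j : Fin n) :
    mtPow C m i j ≤ kleeneStar C i j :=
  le_ciSup (f := fun m : Fin n => mtPow C m i j) (Finite.bddAbove_range _) ⟨m, hm⟩

lemma one_le_kleeneStar_apply_self (C : Matrix (Fin n) (Fin n) ℝ) (i : Fin n) :
    1 ≤ kleeneStar C i i :=
  (if_pos rfl).ge.trans (mtPow_le_kleeneStar_of_lt (m := 0) i.pos i i)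

lemma kleeneStar_nonneg (hC : ∀ i j, 0 ≤ C i j) (i j : Fin n) : 0 ≤ kleeneStar C i j :=
  Real.iSup_nonneg fun m => mtPow_nonneg hC m i j

end Basic

section Walks

variable {C : Matrix (Fin n) (Fin n) ℝ}

/-- `v` encodes the walk `v 0 → v 1 → ⋯ → v m`; its values beyond `m` play no role. -/
def walkWeight (C : Matrix (Fin n) (Fin n) ℝ) (v : ℕ → Fin n) (m : ℕ) : ℝ :=
  ∏ k ∈ Finset.range m, C (v k) (v (k + 1))

/-- The max-times condition `λ(C) ≤ 1`. -/
def CycleWeightsLeOne (C : Matrix (Fin n) (Fin n) ℝ) : Prop :=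
  ∀ (v : ℕ → Fin n) (L : ℕ), L ≤ n → v L = v 0 → walkWeight C v L ≤ 1

lemma walkWeight_succ (C : Matrix (Fin n) (Fin n) ℝ) (v : ℕ → Fin n) (m : ℕ) :
    walkWeight C v (m + 1) = walkWeight C v m * C (v m) (v (m + 1)) :=
  Finset.prod_range_succ _ _

lemma walkWeight_add (C : Matrix (Fin n) (Fin n) ℝ) (v : ℕ → Fin n) (a b : ℕ) :
    walkWeight C v (a + b) = walkWeight C v a * walkWeight C (fun t => v (a + t)) b := by
  simp only [walkWeight, Finset.prod_range_add, add_assoc]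

lemma walkWeight_smul (c : ℝ) (C : Matrix (Fin n) (Fin n) ℝ) (v : ℕ → Fin n) (m : ℕ) :
    walkWeight (c • C) v m = c ^ m * walkWeight C v m := by
  simp [walkWeight, Finset.prod_mul_distrib]

lemma walkWeight_nonneg (hC : ∀ i j, 0 ≤ C i j) (v : ℕ → Fin n) (m : ℕ) :
    0 ≤ walkWeight C v m :=
  Finset.prod_nonneg fun _ _ => hC _ _

lemma walkWeight_le_mtPow (hC : ∀ i j, 0 ≤ C i j) (v : ℕ → Fin n) (m : ℕ) :
    walkWeight C v m ≤ mtPow C m (v 0) (v m) := by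
  induction m with
  | zero => simp [walkWeight, mtPow]
  | succ m ih =>
    rw [walkWeight_succ]
    exact (mul_le_mul_of_nonneg_right ih (hC _ _)).trans
      (le_ciSup (f := fun k => mtPow C m (v 0) k * C k (v (m + 1)))
        (Finite.bddAbove_range _) (v m))

lemma exists_walkWeight_eq_mtPow (hC : ∀ i j, 0 ≤ C i j) (m : ℕ) (i j : Fin n) :
    ∃ v : ℕ → Fin n, v 0 = i ∧ v (m + 1) = j ∧
      mtPow C (m + 1) i j = walkWeight C v (m + 1) := by
  induction m generalizing j with
  | zero =>
    refine ⟨fun t => if t = 0 then i else j, rfl, rfl, ?_⟩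
    simp [walkWeight, mtPow_one hC]
  | succ m ih =>
    have : Nonempty (Fin n) := ⟨i⟩
    obtain ⟨k, hk⟩ := exists_eq_ciSup_of_finite (f := fun k => mtPow C (m + 1) i k * C k j)
    obtain ⟨v, rfl, hvk, hv⟩ := ih k
    refine ⟨Function.update v (m + 1 + 1) j, by simp, by simp, ?_⟩
    have hupd : ∀ t ≤ m + 1, Function.update v (m + 1 + 1) j t = v t :=
      fun t ht => Function.update_of_ne (by omega) _ _
    rw [mtPow_succ_apply, ← hk, hv,
      walkWeight_succ C _ (m + 1), hupd _ le_rfl, Function.update_self, hvk]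
    congr 1
    exact Finset.prod_congr rfl fun t ht => by
      rw [Finset.mem_range] at ht
      rw [hupd t (by omega), hupd (t + 1) (by omega)]

lemma exists_lt_le_apply_eq (v : ℕ → Fin n) : ∃ a b, a < b ∧ b ≤ n ∧ v a = v b := by
  obtain ⟨s, hs, t, ht, hst, hvst⟩ := Finset.exists_ne_map_eq_of_card_lt_of_maps_to
    (s := Finset.range (n + 1)) (t := Finset.univ) (f := v) (by simp) (fun _ _ => by simp)
  rw [Finset.mem_range] at hs ht
  rcases hst.lt_or_gt with h | h
  · exact ⟨s, t, h, by omega, hvst⟩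
  · exact ⟨t, s, h, by omega, hvst.symm⟩

end Walks

section KleeneStar

variable {C : Matrix (Fin n) (Fin n) ℝ} (hC : ∀ i j, 0 ≤ C i j) (hcyc : CycleWeightsLeOne C)
include hC hcyc

/-- A walk of length at least `n` revisits a vertex within its first `n` steps; cutting out
that cycle, of weight at most one, shortens the walk without decreasing its weight. -/
theorem mtPow_le_kleeneStar (m : ℕ) (i j : Fin n) : mtPow C m i j ≤ kleeneStar C i j := by
  induction m using Nat.strong_induction_on generalizing i j with
  | _ m ih =>
  rcases lt_or_ge m n with hm | hm
  · exact mtPow_le_kleeneStar_of_lt hm i j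
  obtain ⟨m, rfl⟩ : ∃ m', m = m' + 1 :=
    Nat.exists_eq_add_one_of_ne_zero (by have := i.pos; omega)
  obtain ⟨v, rfl, rfl, hv⟩ := exists_walkWeight_eq_mtPow hC m i j
  obtain ⟨a, b, hab, hbn, hvab⟩ := exists_lt_le_apply_eq v
  have hsplit : walkWeight C v (m + 1) = walkWeight C v a *
      walkWeight C (fun t => v (a + t)) (b - a) *
        walkWeight C (fun t => v (b + t)) (m + 1 - b) := by
    have h := walkWeight_add C v a (b - a + (m + 1 - b))
    rw [walkWeight_add _ (fun t => v (a + t)), ← mul_assoc,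
      show a + (b - a + (m + 1 - b)) = m + 1 by omega] at h
    simpa only [← add_assoc, Nat.add_sub_cancel' hab.le] using h
  have hcycle : walkWeight C (fun t => v (a + t)) (b - a) ≤ 1 :=
    hcyc _ _ (by omega) (by simp only [Nat.add_sub_cancel' hab.le, add_zero, hvab])
  have hfirst := walkWeight_le_mtPow hC v a
  have hlast := walkWeight_le_mtPow hC (fun t => v (b + t)) (m + 1 - b)
  simp only [add_zero, Nat.add_sub_cancel' (show b ≤ m + 1 by omega)] at hlast
  calc mtPow C (m + 1) (v 0) (v (m + 1))
      = walkWeight C v a * walkWeight C (fun t => v (a + t)) (b - a) *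
          walkWeight C (fun t => v (b + t)) (m + 1 - b) := hv.trans hsplit
    _ ≤ mtPow C a (v 0) (v a) * 1 * mtPow C (m + 1 - b) (v b) (v (m + 1)) :=
      mul_le_mul (mul_le_mul hfirst hcycle (walkWeight_nonneg hC _ _) (mtPow_nonneg hC _ _ _))
        hlast (walkWeight_nonneg hC _ _) (mul_nonneg (mtPow_nonneg hC _ _ _) zero_le_one)
    _ ≤ mtPow C (a + (m + 1 - b)) (v 0) (v (m + 1)) := by
      rw [mul_one, hvab]; exact mtPow_mul_mtPow_le hC _ _ _ _ _
    _ ≤ kleeneStar C (v 0) (v (m + 1)) := ih _ (by omega) _ _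

theorem le_kleeneStar (i j : Fin n) : C i j ≤ kleeneStar C i j :=
  mtPow_one hC i j ▸ mtPow_le_kleeneStar hC hcyc 1 i j

theorem kleeneStar_mul_kleeneStar_le (i k j : Fin n) :
    kleeneStar C i k * kleeneStar C k j ≤ kleeneStar C i j := by
  have : Nonempty (Fin n) := ⟨i⟩
  rw [kleeneStar, Real.iSup_mul_of_nonneg (kleeneStar_nonneg hC k j)]
  refine ciSup_le fun a => ?_
  rw [kleeneStar, Real.mul_iSup_of_nonneg (mtPow_nonneg hC _ i k)]
  exact ciSup_le fun b =>
    (mtPow_mul_mtPow_le hC _ _ i k j).trans (mtPow_le_kleeneStar hC hcyc _ i j)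

end KleeneStar

section Subeigenvector

variable {C : Matrix (Fin n) (Fin n) ℝ} {x : Fin n → ℝ}

/-- `C ⊗ x ≤ x` in max-times arithmetic. -/
def IsSubeigenvector (C : Matrix (Fin n) (Fin n) ℝ) (x : Fin n → ℝ) : Prop :=
  ∀ i j, C i j * x j ≤ x i

lemma IsSubeigenvector.walkWeight_mul_le (hC : ∀ i j, 0 ≤ C i j) (hx : IsSubeigenvector C x)
    (v : ℕ → Fin n) (m : ℕ) : walkWeight C v m * x (v m) ≤ x (v 0) := by
  induction m with
  | zero => simp [walkWeight]
  | succ m ih =>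
    rw [walkWeight_succ, mul_assoc]
    exact (mul_le_mul_of_nonneg_left (hx _ _) (walkWeight_nonneg hC v m)).trans ih

theorem IsSubeigenvector.cycleWeightsLeOne (hC : ∀ i j, 0 ≤ C i j) (hx : IsSubeigenvector C x)
    (hpos : ∀ i, 0 < x i) : CycleWeightsLeOne C := fun v L _ hvL =>
  (mul_le_iff_le_one_left (hpos (v 0))).1 (hvL ▸ hx.walkWeight_mul_le hC v L)

lemma IsSubeigenvector.mtPow (hC : ∀ i j, 0 ≤ C i j) (hx : IsSubeigenvector C x)
    (hx₀ : ∀ i, 0 ≤ x i) (m : ℕ) : IsSubeigenvector (mtPow C m) x := by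
  intro i j
  have : Nonempty (Fin n) := ⟨i⟩
  induction m generalizing j with
  | zero =>
    simp only [_root_.mtPow]
    split_ifs with h
    · rw [h, one_mul]
    · rw [zero_mul]; exact hx₀ i
  | succ m ih =>
    rw [mtPow_succ_apply, Real.iSup_mul_of_nonneg (hx₀ j)]
    refine ciSup_le fun k => ?_
    rw [mul_assoc]
    exact (mul_le_mul_of_nonneg_left (hx k j) (mtPow_nonneg hC m i k)).trans (ih k)

lemma IsSubeigenvector.kleeneStar (hC : ∀ i j, 0 ≤ C i j) (hx : IsSubeigenvector C x)
    (hx₀ : ∀ i, 0 ≤ x i) : IsSubeigenvector (kleeneStar C) x := fun i j => by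
  have : Nonempty (Fin n) := ⟨i⟩
  rw [_root_.kleeneStar, Real.iSup_mul_of_nonneg (hx₀ j)]
  exact ciSup_le fun m => hx.mtPow hC hx₀ m i j

lemma IsSubeigenvector.mtMulVec_eq (hdiag : ∀ i, 1 ≤ C i i) (hx₀ : ∀ i, 0 ≤ x i)
    (hx : IsSubeigenvector C x) : mtMulVec C x = x := by
  funext i
  have : Nonempty (Fin n) := ⟨i⟩
  refine le_antisymm (ciSup_le (hx i)) ?_
  calc x i ≤ C i i * x i := le_mul_of_one_le_left (hx₀ i) (hdiag i)
    _ ≤ mtMulVec C x i := le_mtMulVec C x i i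

theorem mtMulVec_kleeneStar_eq_self (hC : ∀ i j, 0 ≤ C i j) (hx₀ : ∀ i, 0 ≤ x i)
    (hx : IsSubeigenvector C x) : mtMulVec (kleeneStar C) x = x :=
  (hx.kleeneStar hC hx₀).mtMulVec_eq (one_le_kleeneStar_apply_self C) hx₀

lemma isSubeigenvector_mtMulVec (htrans : ∀ i k j, C i k * C k j ≤ C i j)
    (hC : ∀ i j, 0 ≤ C i j) {u : Fin n → ℝ} (hu : ∀ i, 0 ≤ u i) :
    IsSubeigenvector C (mtMulVec C u) := fun i k => by
  have : Nonempty (Fin n) := ⟨i⟩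
  rw [mtMulVec, Real.mul_iSup_of_nonneg (hC i k)]
  refine ciSup_le fun j => ?_
  rw [← mul_assoc]
  exact (mul_le_mul_of_nonneg_right (htrans i k j) (hu j)).trans (le_mtMulVec C u i j)

end Subeigenvector

section HilbertRatio

variable {C : Matrix (Fin n) (Fin n) ℝ} {u x : Fin n → ℝ}

noncomputable def hilbertRatio (x : Fin n → ℝ) : ℝ := (⨆ i, x i) * ⨆ j, (x j)⁻¹

noncomputable def maxEntry (C : Matrix (Fin n) (Fin n) ℝ) : ℝ := ⨆ i, ⨆ j, C i j

lemma le_maxEntry (C : Matrix (Fin n) (Fin n) ℝ) (i j : Fin n) : C i j ≤ maxEntry C :=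
  (le_ciSup (f := C i) (Finite.bddAbove_range _) j).trans
    (le_ciSup (f := fun i => ⨆ j, C i j) (Finite.bddAbove_range _) i)

lemma div_le_hilbertRatio (hx : ∀ i, 0 < x i) (i j : Fin n) : x i / x j ≤ hilbertRatio x :=
  mul_le_mul (le_ciSup (Finite.bddAbove_range x) i)
    (le_ciSup (f := fun j => (x j)⁻¹) (Finite.bddAbove_range _) j) (inv_nonneg.2 (hx j).le)
    ((hx i).le.trans (le_ciSup (Finite.bddAbove_range x) i))

lemma hilbertRatio_le_iff (hx : ∀ i, 0 < x i) {c : ℝ} (hc : 0 ≤ c) :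
    hilbertRatio x ≤ c ↔ ∀ i j, x i ≤ c * x j := by
  refine ⟨fun h i j => (div_le_iff₀ (hx j)).1 ((div_le_hilbertRatio hx i j).trans h),
    fun h => ?_⟩
  rw [hilbertRatio, Real.mul_iSup_of_nonneg (Real.iSup_nonneg fun i => (hx i).le)]
  refine Real.iSup_le (fun j => ?_) hc
  rw [← div_eq_mul_inv, div_le_iff₀ (hx j)]
  exact Real.iSup_le (fun i => h i j) (mul_nonneg hc (hx j).le)

lemma le_hilbertRatio_of_mtMulVec_eq (hx : ∀ i, 0 < x i) (hfix : mtMulVec C x = x)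
    (i j : Fin n) : C i j ≤ hilbertRatio x :=
  ((le_div_iff₀ (hx j)).2 ((le_mtMulVec C x i j).trans_eq (congrFun hfix i))).trans
    (div_le_hilbertRatio hx i j)

lemma mtMulVec_nonneg (hC : ∀ i j, 0 ≤ C i j) (hu : ∀ i, 0 ≤ u i) (i : Fin n) :
    0 ≤ mtMulVec C u i :=
  Real.iSup_nonneg fun j => mul_nonneg (hC i j) (hu j)

lemma le_mtMulVec_kleeneStar (hu : ∀ i, 0 ≤ u i) (i : Fin n) :
    u i ≤ mtMulVec (kleeneStar C) u i :=
  (le_mul_of_one_le_left (hu i) (one_le_kleeneStar_apply_self C i)).trans (le_mtMulVec _ u i i)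

lemma mtMulVec_kleeneStar_pos (hu : ∀ i, 0 < u i) (i : Fin n) :
    0 < mtMulVec (kleeneStar C) u i :=
  (hu i).trans_le (le_mtMulVec_kleeneStar (hu · |>.le) i)

lemma one_le_maxEntry_kleeneStar [Nonempty (Fin n)] (C : Matrix (Fin n) (Fin n) ℝ) :
    1 ≤ maxEntry (kleeneStar C) :=
  (one_le_kleeneStar_apply_self C (Classical.arbitrary _)).trans (le_maxEntry _ _ _)

lemma mtMulVec_kleeneStar_one_le (i j : Fin n) :
    mtMulVec (kleeneStar C) 1 i ≤ maxEntry (kleeneStar C) * mtMulVec (kleeneStar C) 1 j := by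
  have : Nonempty (Fin n) := ⟨i⟩
  have hone : ∀ k, (0 : ℝ) ≤ (1 : Fin n → ℝ) k := fun _ => zero_le_one
  calc mtMulVec (kleeneStar C) 1 i ≤ maxEntry (kleeneStar C) :=
        ciSup_le fun k => by simpa using le_maxEntry _ i k
    _ ≤ maxEntry (kleeneStar C) * mtMulVec (kleeneStar C) 1 j :=
        le_mul_of_one_le_right
          (zero_le_one.trans (one_le_maxEntry_kleeneStar C))
          (le_mtMulVec_kleeneStar hone j)

lemma mtMulVec_le_mul_mtMulVec (htrans : ∀ i k j, C i k * C k j ≤ C i j) {δ : ℝ} (hδ : 0 < δ)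
    (hCδ : ∀ i j, δ⁻¹ ≤ C i j) (hu : ∀ i, 0 ≤ u i) (i j : Fin n) :
    mtMulVec C u i ≤ δ * mtMulVec C u j := by
  have hC : ∀ i j, 0 ≤ C i j := fun i j => (inv_pos.2 hδ).le.trans (hCδ i j)
  rw [← inv_mul_le_iff₀ hδ]
  exact (mul_le_mul_of_nonneg_right (hCδ j i) (mtMulVec_nonneg hC hu i)).trans
    (isSubeigenvector_mtMulVec htrans hC hu j i)

end HilbertRatio

section Minimizers

variable {C : Matrix (Fin n) (Fin n) ℝ} {u x : Fin n → ℝ}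
  (hC : ∀ i j, 0 ≤ C i j) (hcyc : CycleWeightsLeOne C)
include hC hcyc

lemma mtMulVec_kleeneStar_idem (hu : ∀ i, 0 ≤ u i) :
    mtMulVec (kleeneStar C) (mtMulVec (kleeneStar C) u) = mtMulVec (kleeneStar C) u :=
  (isSubeigenvector_mtMulVec (kleeneStar_mul_kleeneStar_le hC hcyc) (kleeneStar_nonneg hC)
    hu).mtMulVec_eq (one_le_kleeneStar_apply_self C) (mtMulVec_nonneg (kleeneStar_nonneg hC) hu)

theorem maxEntry_kleeneStar_le_hilbertRatio [Nonempty (Fin n)] (hu : ∀ i, 0 < u i) :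
    maxEntry (kleeneStar C) ≤ hilbertRatio (mtMulVec (kleeneStar C) u) :=
  ciSup_le fun i => ciSup_le fun j =>
    le_hilbertRatio_of_mtMulVec_eq (mtMulVec_kleeneStar_pos hu)
      (mtMulVec_kleeneStar_idem hC hcyc (hu · |>.le)) i j

lemma isSubeigenvector_max_inv {δ : ℝ} (hδ : 0 < δ) (hx : ∀ i, 0 < x i)
    (hfix : mtMulVec (kleeneStar C) x = x) (hxδ : ∀ i j, x i ≤ δ * x j) :
    IsSubeigenvector (fun i j => max δ⁻¹ (C i j)) x := fun i j => by
  rw [max_mul_of_nonneg _ _ (hx j).le]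
  refine max_le ((inv_mul_le_iff₀ hδ).2 (hxδ j i)) ?_
  exact (mul_le_mul_of_nonneg_right (le_kleeneStar hC hcyc i j) (hx j).le).trans
    ((le_mtMulVec _ x i j).trans_eq (congrFun hfix i))

lemma cycleWeightsLeOne_max_inv_maxEntry [Nonempty (Fin n)] :
    CycleWeightsLeOne fun i j => max (maxEntry (kleeneStar C))⁻¹ (C i j) := by
  have hone : ∀ i, (0 : ℝ) < (1 : Fin n → ℝ) i := fun _ => one_pos
  have hy := mtMulVec_kleeneStar_pos (C := C) hone
  have hδ : 0 < maxEntry (kleeneStar C) := one_pos.trans_le (one_le_maxEntry_kleeneStar C)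
  exact (isSubeigenvector_max_inv hC hcyc hδ hy (mtMulVec_kleeneStar_idem hC hcyc (hone · |>.le))
    mtMulVec_kleeneStar_one_le).cycleWeightsLeOne
      (fun i j => le_max_of_le_left (inv_pos.2 hδ).le) hy

theorem isLeast_hilbertRatio_kleeneStar [Nonempty (Fin n)] :
    IsLeast {r | ∃ u : Fin n → ℝ, (∀ i, 0 < u i) ∧ r = hilbertRatio (mtMulVec (kleeneStar C) u)}
      (maxEntry (kleeneStar C)) := by
  have hone : ∀ i, (0 : ℝ) < (1 : Fin n → ℝ) i := fun _ => one_pos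
  refine ⟨⟨1, hone, le_antisymm (maxEntry_kleeneStar_le_hilbertRatio hC hcyc hone) ?_⟩, ?_⟩
  · exact (hilbertRatio_le_iff (mtMulVec_kleeneStar_pos hone)
      (zero_le_one.trans (one_le_maxEntry_kleeneStar C))).2 mtMulVec_kleeneStar_one_le
  · rintro r ⟨u, hu, rfl⟩
    exact maxEntry_kleeneStar_le_hilbertRatio hC hcyc hu

theorem hilbertRatio_eq_maxEntry_iff [Nonempty (Fin n)] (hu : ∀ i, 0 < u i) :
    hilbertRatio (mtMulVec (kleeneStar C) u) = maxEntry (kleeneStar C) ↔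
      ∃ w : Fin n → ℝ, (∀ i, 0 < w i) ∧ mtMulVec (kleeneStar C) u =
        mtMulVec (kleeneStar fun i j => max (maxEntry (kleeneStar C))⁻¹ (C i j)) w := by
  set δ := maxEntry (kleeneStar C)
  set x := mtMulVec (kleeneStar C) u
  set M : Matrix (Fin n) (Fin n) ℝ := fun i j => max δ⁻¹ (C i j)
  have hδ : 0 < δ := one_pos.trans_le (one_le_maxEntry_kleeneStar C)
  have hx : ∀ i, 0 < x i := mtMulVec_kleeneStar_pos hu
  have hM : ∀ i j, 0 ≤ M i j := fun i j => le_max_of_le_left (inv_pos.2 hδ).le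
  have hMcyc : CycleWeightsLeOne M := cycleWeightsLeOne_max_inv_maxEntry hC hcyc
  constructor
  · intro h
    have hxM : IsSubeigenvector M x := isSubeigenvector_max_inv hC hcyc hδ hx
      (mtMulVec_kleeneStar_idem hC hcyc (hu · |>.le)) ((hilbertRatio_le_iff hx hδ.le).1 h.le)
    exact ⟨x, hx, (mtMulVec_kleeneStar_eq_self hM (hx · |>.le) hxM).symm⟩
  · rintro ⟨w, hw, hxw⟩
    refine le_antisymm ((hilbertRatio_le_iff hx hδ.le).2 ?_)
      (maxEntry_kleeneStar_le_hilbertRatio hC hcyc hu)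
    rw [hxw]
    exact mtMulVec_le_mul_mtMulVec (kleeneStar_mul_kleeneStar_le hM hMcyc) hδ
      (fun i j => (le_max_left _ _).trans (le_kleeneStar hM hMcyc i j)) (hw · |>.le)

end Minimizers

section SpectralRadius

variable {A : Matrix (Fin n) (Fin n) ℝ}

lemma cycleMean_map_range (A : Matrix (Fin n) (Fin n) ℝ) {v : ℕ → Fin n} {L : ℕ}
    (hvL : v L = v 0) :
    cycleMean A ((List.range L).map v) = walkWeight A v L ^ (1 / L : ℝ) := by
  have hrot : ((List.range L).map v).rotate 1 = (List.range L).map (fun k => v (k + 1)) := by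
    rcases L with _ | L
    · rfl
    conv_lhs => rw [List.range_succ_eq_map]
    rw [List.range_succ, List.map_cons, List.rotate_cons_succ, List.rotate_zero,
      List.map_append, List.map_map, List.map_singleton, hvL]
    rfl
  rw [cycleMean, hrot, List.zip_map', List.map_map, List.length_map, List.length_range, walkWeight,
    Finset.prod_eq_multiset_prod, Finset.range_val, Multiset.range, Multiset.map_coe,
    Multiset.prod_coe]
  rfl

lemma cycleMean_le_specRad {c : List (Fin n)} (hc : c ≠ []) (hcn : c.length ≤ n) :
    cycleMean A c ≤ specRad A := by
  refine le_csSup (Set.Finite.bddAbove ?_) ⟨c, hc, hcn, rfl⟩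
  refine ((List.finite_length_le (Fin n) n).image (cycleMean A)).subset ?_
  rintro r ⟨c, -, hcn, rfl⟩
  exact ⟨c, hcn, rfl⟩

lemma pos_of_specRad_pos (h : 0 < specRad A) : 0 < n := by
  refine Nat.pos_of_ne_zero fun hn => ?_
  subst hn
  simp [specRad] at h

theorem cycleWeightsLeOne_inv_specRad_smul (hA : ∀ i j, 0 ≤ A i j) (hlam : 0 < specRad A) :
    CycleWeightsLeOne ((specRad A)⁻¹ • A) := by
  intro v L hLn hvL
  rcases Nat.eq_zero_or_pos L with rfl | hL
  · simp [walkWeight]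
  have hmean : walkWeight A v L ^ (L : ℝ)⁻¹ ≤ specRad A := by
    rw [← one_div, ← cycleMean_map_range A hvL]
    refine cycleMean_le_specRad ?_ (by simpa using hLn)
    simp only [ne_eq, List.map_eq_nil_iff, List.range_eq_nil]
    omega
  rw [Real.rpow_inv_le_iff_of_pos (walkWeight_nonneg hA v L) hlam.le (by positivity),
    Real.rpow_natCast] at hmean
  rw [walkWeight_smul, inv_pow]
  exact inv_mul_le_one_of_le₀ hmean (by positivity)

end SpectralRadius

end MaxTimes

theorem stmt14_general {n : ℕ} (A : Matrix (Fin n) (Fin n) ℝ)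
    (hA : ∀ i j, 0 ≤ A i j) (hlam : 0 < specRad A)
    (δ : ℝ) (hδ : δ = ⨆ i, ⨆ j, kleeneStar ((specRad A)⁻¹ • A) i j)
    (M : Matrix (Fin n) (Fin n) ℝ)
    (hM : M = fun i j => max δ⁻¹ ((specRad A)⁻¹ * A i j)) :
    IsLeast {v : ℝ | ∃ u : Fin n → ℝ, (∀ i, 0 < u i) ∧
        v = (⨆ i, mtMulVec (kleeneStar ((specRad A)⁻¹ • A)) u i) *
            (⨆ j, (mtMulVec (kleeneStar ((specRad A)⁻¹ • A)) u j)⁻¹)} δ ∧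
      ∀ x : Fin n → ℝ,
        (∃ u : Fin n → ℝ, (∀ i, 0 < u i) ∧
            x = mtMulVec (kleeneStar ((specRad A)⁻¹ • A)) u) →
          ((⨆ i, x i) * (⨆ j, (x j)⁻¹) = δ ↔
            ∃ u : Fin n → ℝ, (∀ i, 0 < u i) ∧ x = mtMulVec (kleeneStar M) u) := by
  have : Nonempty (Fin n) := ⟨⟨0, pos_of_specRad_pos hlam⟩⟩
  have hB : ∀ i j, 0 ≤ ((specRad A)⁻¹ • A) i j := fun i j =>
    mul_nonneg (inv_nonneg.2 hlam.le) (hA i j)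
  have hcyc := cycleWeightsLeOne_inv_specRad_smul hA hlam
  subst hδ hM
  refine ⟨isLeast_hilbertRatio_kleeneStar hB hcyc, ?_⟩
  rintro x ⟨u, hu, rfl⟩
  exact hilbertRatio_eq_maxEntry_iff hB hcyc hu

theorem stmt14 {n : ℕ} (hn : 0 < n) (A : Matrix (Fin n) (Fin n) ℝ)
    (hA : ∀ i j, 0 ≤ A i j) (hlam : 0 < specRad A)
    (δ : ℝ) (hδ : δ = ⨆ i, ⨆ j, kleeneStar ((specRad A)⁻¹ • A) i j)
    (M : Matrix (Fin n) (Fin n) ℝ)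
    (hM : M = fun i j => max δ⁻¹ ((specRad A)⁻¹ * A i j)) :
    IsLeast {v : ℝ | ∃ u : Fin n → ℝ, (∀ i, 0 < u i) ∧
        v = (⨆ i, mtMulVec (kleeneStar ((specRad A)⁻¹ • A)) u i) *
            (⨆ j, (mtMulVec (kleeneStar ((specRad A)⁻¹ • A)) u j)⁻¹)} δ ∧
      ∀ x : Fin n → ℝ,
        (∃ u : Fin n → ℝ, (∀ i, 0 < u i) ∧
            x = mtMulVec (kleeneStar ((specRad A)⁻¹ • A)) u) →
          ((⨆ i, x i) * (⨆ j, (x j)⁻¹) = δ ↔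
            ∃ u : Fin n → ℝ, (∀ i, 0 < u i) ∧ x = mtMulVec (kleeneStar M) u) :=
  stmt14_general A hA hlam δ hδ M hM
end
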